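/- arXiv:2402.01356 — 5 statements merged into one kernel-verified Lean document; each statement's English description precedes it below -/
import Mathlib

section
/- Let R be a commutative reduced ring with unity and a ∈ R. Then the intersection P(a) of all minimal prime ideals of R containing a equals {b ∈ R : Ann(a) ⊆ Ann(b)}, where Ann(x) denotes the annihilator of x in R. -/
/-- In a reduced ring, if `a` lies in a minimal prime `Q`, then some `s ∉ Q`
annihilates `a`. -/
lemma exists_ann_of_mem_minimalPrime {R : Type*} [CommRing R] [IsReduced R]
    {Q : Ideal R} (hQ : Q ∈ minimalPrimes R) {a : R} (ha : a ∈ Q) :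
    ∃ s ∉ Q, s * a = 0 := by
  haveI hQp : Q.IsPrime := hQ.1.1
  -- `a/1` is in the maximal ideal of the localization at `Q`, hence nilpotent.
  have hmem : algebraMap R (Localization Q.primeCompl) a ∈
      IsLocalRing.maximalIdeal (Localization Q.primeCompl) := by
    have : a ∈ (IsLocalRing.maximalIdeal (Localization Q.primeCompl)).comap
        (algebraMap R (Localization Q.primeCompl)) := by
      rw [← Ideal.under_def, Localization.AtPrime.comap_maximalIdeal]; exact ha
    exact this
  have hnil : IsNilpotent (algebraMap R (Localization Q.primeCompl) a) := by
    haveI : Ring.KrullDimLE 0 (Localization Q.primeCompl) := .of_isLocalization _ hQ _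
    exact Ring.KrullDimLE.isNilpotent_iff_mem_maximalIdeal.2 hmem
  obtain ⟨n, hn⟩ := hnil
  rw [← map_pow, IsLocalization.map_eq_zero_iff Q.primeCompl] at hn
  obtain ⟨⟨s, hs⟩, hsa⟩ := hn
  refine ⟨s, hs, ?_⟩
  -- `(s*a)^(n+1) = s * (s^n * a^n) * a^n ... = 0`, so `s*a` is nilpotent, hence zero.
  have : (s * a) ^ (n + 1) = s ^ n * (s * a ^ n) * a := by ring
  have hz : (s * a) ^ (n + 1) = 0 := by
    rw [this]; simp only at hsa; rw [hsa]; ring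
  exact IsReduced.eq_zero _ ⟨n + 1, hz⟩

/-- In a commutative reduced ring, the intersection `P(a)` of all minimal prime
ideals containing `a` equals `{b | Ann(a) ⊆ Ann(b)}`. -/
theorem inter_minimalPrimes_eq_ann_subset
    {R : Type*} [CommRing R] [IsReduced R] (a : R) :
    {b : R | ∀ Q ∈ minimalPrimes R, a ∈ Q → b ∈ Q} =
      {b : R | ∀ r : R, r * a = 0 → r * b = 0} := by
  ext b
  simp only [Set.mem_setOf_eq]
  constructor
  · intro hb r hra
    -- `r*b` is in every minimal prime, hence nilpotent, hence zero.
    have hmem : ∀ Q ∈ minimalPrimes R, r * b ∈ Q := by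
      intro Q hQ
      haveI : Q.IsPrime := hQ.1.1
      by_cases ha : a ∈ Q
      · exact Ideal.mul_mem_left _ _ (hb Q hQ ha)
      · have hr : r ∈ Q := by
          rcases ‹Q.IsPrime›.mem_or_mem (show r * a ∈ Q by rw [hra]; exact Q.zero_mem) with h | h
          · exact h
          · exact absurd h ha
        exact Ideal.mul_mem_right _ _ hr
    have : r * b ∈ sInf ((⊥ : Ideal R).minimalPrimes) := by
      rw [Ideal.mem_sInf]
      intro Q hQ
      exact hmem Q hQ
    rw [Ideal.sInf_minimalPrimes] at this
    rw [← Ideal.zero_eq_bot] at this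
    exact IsReduced.eq_zero _ (mem_nilradical.mp this)
  · intro h Q hQ haQ
    haveI : Q.IsPrime := hQ.1.1
    obtain ⟨s, hs, hsa⟩ := exists_ann_of_mem_minimalPrime hQ haQ
    have hsb : s * b = 0 := h s hsa
    rcases ‹Q.IsPrime›.mem_or_mem (show s * b ∈ Q by rw [hsb]; exact Q.zero_mem) with h' | h'
    · exact absurd h' hs
    · exact h'
end

section
/- Let R be a commutative reduced ring with unity and I a proper ideal of R. Then I is a z⁰-ideal (i.e., a ∈ I implies P(a) ⊆ I, where P(a) is the intersection of all minimal prime ideals containing a) if and only if for all a, b ∈ R: Ann(a) = Ann(b) and b ∈ I imply a ∈ I. -/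
/-!
Both conditions are statements about annihilators, because in a reduced ring `b ∈ P(a)` holds
exactly when `Ann(a) ⊆ Ann(b)`. Given that, `Ann(a) = Ann(b)` puts `a` in `P(b)`, and conversely,
for `a ∈ I` and `Ann(a) ⊆ Ann(b)` the element `a * b ∈ I` has the same annihilator as `b`.
-/

namespace Ideal

variable {R : Type*} [CommRing R] [IsReduced R]

/-- The localization at a minimal prime is zero-dimensional, so `b` becomes nilpotent there. -/
theorem exists_notMem_mul_eq_zero_of_mem_minimalPrimes {Q : Ideal R}
    (hQ : Q ∈ minimalPrimes R) {b : R} (hb : b ∈ Q) : ∃ s ∉ Q, s * b = 0 := by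
  have := hQ.isPrime
  have : Ring.KrullDimLE 0 (Localization.AtPrime Q) := .of_isLocalization _ hQ _
  have hnil : IsNilpotent (algebraMap R (Localization.AtPrime Q) b) := by
    rw [Ring.KrullDimLE.isNilpotent_iff_mem_maximalIdeal]
    exact (IsLocalization.AtPrime.to_map_mem_maximal_iff _ Q b).mpr hb
  obtain ⟨n, hn⟩ := hnil
  rw [← map_pow, IsLocalization.map_eq_zero_iff Q.primeCompl] at hn
  obtain ⟨⟨s, hs⟩, hsb⟩ := hn
  refine ⟨s, hs, IsReduced.eq_zero _ ⟨n + 1, ?_⟩⟩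
  calc (s * b) ^ (n + 1) = s ^ n * b * (s * b ^ n) := by ring
    _ = 0 := by rw [hsb, mul_zero]

theorem eq_zero_of_forall_mem_minimalPrimes {x : R} (hx : ∀ Q ∈ minimalPrimes R, x ∈ Q) :
    x = 0 := by
  have hrad : x ∈ (⊥ : Ideal R).radical :=
    sInf_minimalPrimes (I := (⊥ : Ideal R)) ▸ mem_sInf.mpr hx
  exact IsReduced.eq_zero x (mem_nilradical.mp hrad)

theorem forall_mem_minimalPrimes_imp_iff {a b : R} :
    (∀ Q ∈ minimalPrimes R, a ∈ Q → b ∈ Q) ↔ ∀ r : R, r * a = 0 → r * b = 0 := by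
  constructor
  · intro h r hr
    refine eq_zero_of_forall_mem_minimalPrimes fun Q hQ => ?_
    rcases hQ.isPrime.mem_or_mem (hr ▸ Q.zero_mem : r * a ∈ Q) with hrQ | haQ
    · exact Q.mul_mem_right b hrQ
    · exact Q.mul_mem_left r (h Q hQ haQ)
  · intro h Q hQ haQ
    obtain ⟨s, hsQ, hsa⟩ := exists_notMem_mul_eq_zero_of_mem_minimalPrimes hQ haQ
    exact (hQ.isPrime.mem_or_mem (h s hsa ▸ Q.zero_mem)).resolve_left hsQ

end Ideal

theorem mul_mul_eq_zero_iff_of_annihilates {R : Type*} [CommRing R] [IsReduced R] {a b : R}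
    (h : ∀ r : R, r * a = 0 → r * b = 0) (r : R) : r * (a * b) = 0 ↔ r * b = 0 := by
  constructor
  · intro hr
    have hrb : r * b * b = 0 := h (r * b) (by rw [← hr]; ring)
    exact IsReduced.eq_zero _ ⟨2, by rw [← mul_zero r, ← hrb]; ring⟩
  · intro hr
    rw [mul_left_comm, hr, mul_zero]

theorem z0Ideal_iff_ann_eq_general
    {R : Type*} [CommRing R] [IsReduced R] (I : Ideal R) :
    (∀ a ∈ I, ∀ b : R, (∀ Q ∈ minimalPrimes R, a ∈ Q → b ∈ Q) → b ∈ I) ↔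
      (∀ a b : R, {r : R | r * a = 0} = {r : R | r * b = 0} → b ∈ I → a ∈ I) := by
  simp only [Ideal.forall_mem_minimalPrimes_imp_iff]
  constructor
  · intro hz a b hab hb
    exact hz b hb a fun r hr => (Set.ext_iff.mp hab r).mpr hr
  · intro h a ha b hab
    exact h b (a * b) (Set.ext fun r => (mul_mul_eq_zero_iff_of_annihilates hab r).symm)
      (I.mul_mem_right b ha)

/-- A proper ideal `I` of a commutative reduced ring is a z⁰-ideal
(`a ∈ I → P(a) ⊆ I`) iff `Ann(a) = Ann(b)` and `b ∈ I` imply `a ∈ I`. -/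
theorem z0Ideal_iff_ann_eq
    {R : Type*} [CommRing R] [IsReduced R] (I : Ideal R) (hI : I ≠ ⊤) :
    (∀ a ∈ I, ∀ b : R, (∀ Q ∈ minimalPrimes R, a ∈ Q → b ∈ Q) → b ∈ I) ↔
      (∀ a b : R, {r : R | r * a = 0} = {r : R | r * b = 0} → b ∈ I → a ∈ I) :=
  z0Ideal_iff_ann_eq_general I
end

section
/- Let R be a commutative reduced ring with unity and I a proper ideal of R. Then I is a z⁰-ideal if and only if for every a ∈ I, Ann(Ann(a)) ⊆ I. -/
/-! In a reduced ring the set `P(a)` of elements lying in every minimal prime that contains `a`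
is exactly `Ann(Ann(a))`, so the two conditions agree element by element. One inclusion holds
because `r * a = 0` puts `r` or `a` in each prime and the intersection of the minimal primes is
the nilradical `0`; the other because every element of a minimal prime `Q` is annihilated by
some element outside `Q`. -/

section

variable {R : Type*} [CommRing R] [IsReduced R]

theorem Ideal.exists_notMem_mul_eq_zero_of_mem_minimalPrimes_s3 {Q : Ideal R}
    (hQ : Q ∈ minimalPrimes R) {x : R} (hx : x ∈ Q) : ∃ r ∉ Q, r * x = 0 := by
  have := hQ.1.1
  have := Ring.KrullDimLE.of_isLocalization Q hQ (Localization.AtPrime Q)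
  -- `R_Q` is a zero-dimensional local ring, so its maximal ideal is its (zero) nilradical.
  have hx₀ : algebraMap R (Localization.AtPrime Q) x = 0 :=
    (Ring.KrullDimLE.isNilpotent_iff_mem_maximalIdeal.2
      ((IsLocalization.AtPrime.to_map_mem_maximal_iff _ Q x).2 hx)).eq_zero
  obtain ⟨⟨r, hr⟩, hrx⟩ := (IsLocalization.map_eq_zero_iff Q.primeCompl _ x).1 hx₀
  exact ⟨r, hr, hrx⟩

theorem eq_zero_of_forall_mem_minimalPrimes {x : R} (hx : ∀ Q ∈ minimalPrimes R, x ∈ Q) :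
    x = 0 := by
  have hx' : x ∈ sInf (minimalPrimes R) := Ideal.mem_sInf.2 hx
  rw [minimalPrimes, Ideal.sInf_minimalPrimes] at hx'
  obtain ⟨n, hn⟩ := hx'
  exact IsNilpotent.eq_zero ⟨n, Ideal.mem_bot.1 hn⟩

theorem forall_minimalPrimes_mem_imp_iff {a b : R} :
    (∀ Q ∈ minimalPrimes R, a ∈ Q → b ∈ Q) ↔ ∀ r : R, r * a = 0 → r * b = 0 := by
  constructor
  · intro h r hra
    refine eq_zero_of_forall_mem_minimalPrimes fun Q hQ => ?_
    have hrQ : r * a ∈ Q := hra ▸ Q.zero_mem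
    rcases hQ.1.1.mem_or_mem hrQ with hr | ha
    · exact Q.mul_mem_right b hr
    · exact Q.mul_mem_left r (h Q hQ ha)
  · intro h Q hQ ha
    obtain ⟨r, hr, hra⟩ := Ideal.exists_notMem_mul_eq_zero_of_mem_minimalPrimes_s3 hQ ha
    have hrb : r * b ∈ Q := h r hra ▸ Q.zero_mem
    exact (hQ.1.1.mem_or_mem hrb).resolve_left hr

end

theorem z0Ideal_iff_annAnn_subset_general
    {R : Type*} [CommRing R] [IsReduced R] (I : Ideal R) :
    (∀ a ∈ I, ∀ b : R, (∀ Q ∈ minimalPrimes R, a ∈ Q → b ∈ Q) → b ∈ I) ↔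
      (∀ a ∈ I, {b : R | ∀ r : R, r * a = 0 → r * b = 0} ⊆ ↑I) := by
  simp only [forall_minimalPrimes_mem_imp_iff, Set.ofPred_subset, SetLike.mem_coe]

/-- A proper ideal `I` of a commutative reduced ring is a z⁰-ideal iff
for every `a ∈ I`, `Ann(Ann(a)) ⊆ I`. -/
theorem z0Ideal_iff_annAnn_subset
    {R : Type*} [CommRing R] [IsReduced R] (I : Ideal R) (hI : I ≠ ⊤) :
    (∀ a ∈ I, ∀ b : R, (∀ Q ∈ minimalPrimes R, a ∈ Q → b ∈ Q) → b ∈ I) ↔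
      (∀ a ∈ I, {b : R | ∀ r : R, r * a = 0 → r * b = 0} ⊆ ↑I) :=
  z0Ideal_iff_annAnn_subset_general I
end

section
/- Let R be a commutative ring with unity. If R is a clean ring (every element is a sum of a unit and an idempotent), then R is an exchange ring: for every a ∈ R there exist b, c ∈ R with bab = b and c(1 − a)(1 − ba) = 1 − ba. -/
/-- A clean commutative ring is an exchange ring: for every `a` there are
`b, c` with `b a b = b` and `c (1 - a)(1 - b a) = 1 - b a`. -/
theorem clean_implies_exchange
    {R : Type*} [CommRing R]
    (hclean : ∀ a : R, ∃ u e : R, IsUnit u ∧ IsIdempotentElem e ∧ a = u + e) :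
    ∀ a : R, ∃ b c : R, b * a * b = b ∧ c * (1 - a) * (1 - b * a) = 1 - b * a := by
  intro a
  obtain ⟨u, e, hu, he, rfl⟩ := hclean a
  obtain ⟨v, rfl⟩ := hu
  set x : R := ↑v⁻¹ with hx
  have hv : (v : R) * x = 1 := v.mul_inv
  have he' : e * e = e := he
  have h1 : (1 - e) * x * ((v : R) + e) = 1 - e := by
    linear_combination (1 - e) * hv - x * he'
  refine ⟨(1 - e) * x, -(x * e), ?_, ?_⟩
  · rw [h1]
    linear_combination x * he'
  · rw [h1]
    linear_combination (x * e + x * (v : R)) * he' + e * hv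
end

section
/- In the ring C(X) of continuous real-valued functions on a topological space X, an element f is a von Neumann regular element (there exists g ∈ C(X) with f = f²g) if and only if the zero set Z(f) = f⁻¹({0}) equals the cozero set coz(h) = {x : h(x) ≠ 0} of some h ∈ C(X). -/
/-- In `C(X)`, `f` is von Neumann regular (`f = f² g` for some `g`) iff
the zero set of `f` is the cozero set of some `h ∈ C(X)`. -/
theorem vonNeumannRegular_iff_zeroSet_eq_cozero
    {X : Type*} [TopologicalSpace X] (f : C(X, ℝ)) :
    (∃ g : C(X, ℝ), f = f ^ 2 * g) ↔
      ∃ h : C(X, ℝ), {x : X | f x = 0} = {x : X | h x ≠ 0} := by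
  constructor
  · rintro ⟨g, hg⟩
    refine ⟨1 - f * g, ?_⟩
    ext x
    have hx : f x = f x ^ 2 * g x := by
      have := congrArg (fun u : C(X, ℝ) => u x) hg
      simpa using this
    simp only [Set.mem_setOf_eq, ContinuousMap.sub_apply, ContinuousMap.one_apply,
      ContinuousMap.mul_apply]
    constructor
    · intro h0; rw [h0]; norm_num
    · intro hne
      have h0 : f x * (1 - f x * g x) = 0 := by nlinarith [hx]
      rcases mul_eq_zero.mp h0 with h' | h'
      · exact h'
      · exact absurd h' hne
  · rintro ⟨h, hh⟩
    have hopen : IsOpen {x : X | f x = 0} := by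
      rw [hh]
      exact isOpen_ne.preimage h.continuous
    have hopen' : IsOpen {x : X | f x ≠ 0} :=
      isOpen_ne.preimage f.continuous
    have hcont : Continuous fun x => if f x = 0 then (0 : ℝ) else (f x)⁻¹ := by
      rw [continuous_iff_continuousAt]
      intro x
      by_cases hx : f x = 0
      · have : ∀ᶠ y in nhds x, (if f y = 0 then (0 : ℝ) else (f y)⁻¹) = 0 := by
          filter_upwards [hopen.mem_nhds hx] with y hy
          simp [hy]
        exact ContinuousAt.congr continuousAt_const (Filter.EventuallyEq.symm this)
      · have h1 : ContinuousAt (fun y => (f y)⁻¹) x :=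
          (f.continuous.continuousAt).inv₀ hx
        have : ∀ᶠ y in nhds x, (if f y = 0 then (0 : ℝ) else (f y)⁻¹) = (f y)⁻¹ := by
          filter_upwards [hopen'.mem_nhds hx] with y hy
          simp [hy]
        exact h1.congr (Filter.EventuallyEq.symm this)
    refine ⟨⟨_, hcont⟩, ?_⟩
    ext x
    by_cases hx : f x = 0
    · simp [ContinuousMap.mul_apply, ContinuousMap.pow_apply, hx]
    · simp only [ContinuousMap.mul_apply, ContinuousMap.pow_apply,
        ContinuousMap.coe_mk, hx, if_false]
      field_simp
end
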